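/- Let A be a unital C*-algebra of real rank zero, let Z be a Hausdorff topological vector space, and let φ : A × A → Z be a continuous bilinear map such that φ(e, 1 − e) = 0 for every projection e ∈ A. Then φ(a,1) = φ(1,a) for every a ∈ A. -/

import Mathlib

/-!
Applying the hypothesis to `e` and to `1 - e` gives `φ e 1 = φ e e = φ 1 e`, so the linear maps
`a ↦ φ a 1` and `a ↦ φ 1 a` agree on projections, hence on their span. A self-adjoint element
with finite spectrum is a real combination of its spectral projections, so real rank zero puts
every self-adjoint element, and therefore every `a = re a + i im a`, in the closure of that span.
Two continuous maps into a Hausdorff space that agree on a dense set are equal.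
-/

open Submodule

lemma LinearMap.apply_one_eq_of_apply_one_sub_eq_zero {R A Z : Type*} [CommSemiring R] [Ring A]
    [Module R A] [AddCommGroup Z] [Module R Z] (φ : A →ₗ[R] A →ₗ[R] Z) {p : A}
    (h₁ : φ p (1 - p) = 0) (h₂ : φ (1 - p) p = 0) : φ p 1 = φ 1 p := by
  rw [map_sub, sub_eq_zero] at h₁
  rw [map_sub, LinearMap.sub_apply, sub_eq_zero] at h₂
  rw [h₁, h₂]

section SpectralDecomposition

variable {A : Type*} [Ring A] [StarRing A] [TopologicalSpace A] [Algebra ℝ A]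
  [ContinuousFunctionalCalculus ℝ A IsSelfAdjoint] {a : A}

lemma isStarProjection_cfc_indicator_singleton (ha : IsSelfAdjoint a)
    (hfin : (spectrum ℝ a).Finite) (μ : ℝ) :
    IsStarProjection (cfc (({μ} : Set ℝ).indicator 1) a) := by
  refine isStarProjection_iff_spectrum_subset_and_isSelfAdjoint.mpr ⟨?_, cfc_predicate _ a⟩
  rw [cfc_map_spectrum _ a ha (hfin.continuousOn _)]
  rintro _ ⟨x, -, rfl⟩
  by_cases hx : x = μ <;> simp [hx]

lemma IsSelfAdjoint.eq_sum_smul_cfc_indicator (ha : IsSelfAdjoint a)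
    (hfin : (spectrum ℝ a).Finite) :
    a = ∑ μ ∈ hfin.toFinset, μ • cfc (({μ} : Set ℝ).indicator 1) a := by
  have hcont (f : ℝ → ℝ) : ContinuousOn f (spectrum ℝ a) := hfin.continuousOn f
  simp_rw [← cfc_smul _ _ a (hcont _)]
  rw [← cfc_sum _ a _ (fun _ _ => hcont _)]
  conv_lhs => rw [← cfc_id ℝ a]
  refine cfc_congr fun x hx => ?_
  rw [Finset.sum_apply, Finset.sum_eq_single_of_mem x (hfin.mem_toFinset.mpr hx)]
  · simp
  · intro μ _ hμ
    simp [hμ.symm]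

lemma IsSelfAdjoint.mem_span_isStarProjection_of_finite_spectrum (ha : IsSelfAdjoint a)
    (hfin : (spectrum ℝ a).Finite) :
    a ∈ span ℝ {p : A | IsStarProjection p} := by
  rw [ha.eq_sum_smul_cfc_indicator hfin]
  exact sum_mem fun μ _ => smul_mem _ μ
    (subset_span (isStarProjection_cfc_indicator_singleton ha hfin μ))

end SpectralDecomposition

theorem dense_span_isStarProjection_of_realRankZero {A : Type*} [CStarAlgebra A]
    (hRR0 : ∀ a : A, IsSelfAdjoint a →
      a ∈ closure {b : A | IsSelfAdjoint b ∧ (spectrum ℂ b).Finite}) :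
    Dense (span ℂ {p : A | IsStarProjection p} : Set A) := by
  set M := (span ℂ {p : A | IsStarProjection p}).topologicalClosure
  have hsa {a : A} (ha : IsSelfAdjoint a) : a ∈ M := by
    refine closure_mono ?_ (hRR0 a ha)
    rintro b ⟨hb, hfin⟩
    have hfinℝ : (spectrum ℝ b).Finite := by
      rw [← spectrum.preimage_algebraMap ℂ]
      exact hfin.preimage (algebraMap ℝ ℂ).injective.injOn
    exact span_le_restrictScalars ℝ ℂ _ (hb.mem_span_isStarProjection_of_finite_spectrum hfinℝ)
  refine dense_iff_topologicalClosure_eq_top.mpr (eq_top_iff.mpr fun a _ => ?_)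
  rw [← realPart_add_I_smul_imaginaryPart a]
  exact add_mem (hsa (realPart a).2) (smul_mem _ _ (hsa (imaginaryPart a).2))

theorem stmt1 {A Z : Type*} [CStarAlgebra A]
    [AddCommGroup Z] [Module ℂ Z] [TopologicalSpace Z] [T2Space Z]
    (hRR0 : ∀ a : A, IsSelfAdjoint a →
      a ∈ closure {b : A | IsSelfAdjoint b ∧ (spectrum ℂ b).Finite})
    (φ : A →ₗ[ℂ] A →ₗ[ℂ] Z)
    (hcont : Continuous fun p : A × A => φ p.1 p.2)
    (h : ∀ e : A, IsSelfAdjoint e → IsIdempotentElem e → φ e (1 - e) = 0) :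
    ∀ a : A, φ a 1 = φ 1 a := by
  have hproj : Set.EqOn (φ.flip 1) (φ 1) {p : A | IsStarProjection p} := fun p hp =>
    φ.apply_one_eq_of_apply_one_sub_eq_zero (h p hp.isSelfAdjoint hp.isIdempotentElem) <| by
      simpa using h (1 - p) hp.one_sub.isSelfAdjoint hp.one_sub.isIdempotentElem
  have heq := Continuous.ext_on (dense_span_isStarProjection_of_realRankZero hRR0)
    (hcont.comp (continuous_id.prodMk continuous_const))
    (hcont.comp (continuous_const.prodMk continuous_id)) (LinearMap.eqOn_span' hproj)
  exact congrFun heq
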